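/- Conversely, there exists a dimensional constant C = C(n) such that for every hypersurface Σ ⊂ ℝⁿ⁺¹, λ(Σ) ≤ C · sup over x ∈ ℝⁿ⁺¹, r > 0 of ℋⁿ(Σ ∩ B_r(x)) / rⁿ. -/

import Mathlib

open MeasureTheory Metric

/-- The Gaussian area (F-functional). -/
noncomputable def Ffun (n : ℕ) (S : Set (EuclideanSpace ℝ (Fin (n + 1))))
    (x₀ : EuclideanSpace ℝ (Fin (n + 1))) (t₀ : ℝ) : ℝ :=
  (4 * Real.pi * t₀) ^ (-(n : ℝ) / 2) *
    ∫ x in S, Real.exp (-‖x - x₀‖ ^ 2 / (4 * t₀)) ∂(μH[(n : ℝ)])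

/-- The entropy: supremum of the F-functional over all centers and scales. -/
noncomputable def entropy (n : ℕ) (S : Set (EuclideanSpace ℝ (Fin (n + 1)))) : ℝ :=
  ⨆ x₀ : EuclideanSpace ℝ (Fin (n + 1)), ⨆ t₀ : Set.Ioi (0 : ℝ), Ffun n S x₀ t₀

/-!
Cut space into the shells `r k ≤ |x - x₀| < r (k + 1)` with `r = √(4t)`. On the `k`-th shell the
Gaussian `exp (-|x - x₀|² / 4t)` is at most `e⁻ᵏ`, and the shell lies in a ball of radius
`r (k + 1)`, which carries area at most `M rⁿ (k + 1)ⁿ`. Summing over the shells bounds the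
Gaussian integral by `M rⁿ ∑ (k + 1)ⁿ e⁻ᵏ`, and `rⁿ = (4t)^(n/2)` cancels the normalisation
`(4πt)^(-n/2)` up to `π^(-n/2)`.
-/

open Real

theorem summable_succ_pow_mul_exp_neg (d : ℕ) :
    Summable fun j : ℕ => ((j : ℝ) + 1) ^ d * exp (-j) := by
  have h := ((summable_nat_add_iff 1).mpr (summable_pow_mul_exp_neg_nat_mul d one_pos)).mul_left
    (exp 1)
  refine h.congr fun j => ?_
  push_cast
  rw [mul_left_comm, ← exp_add]
  ring_nf

noncomputable def gaussianShellSum (d : ℕ) : ℝ := ∑' j : ℕ, ((j : ℝ) + 1) ^ d * exp (-j)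

theorem gaussianShellSum_pos (d : ℕ) : 0 < gaussianShellSum d :=
  (summable_succ_pow_mul_exp_neg d).tsum_pos (fun _ => by positivity) 0 (by positivity)

section Shells

variable {X : Type*} [PseudoMetricSpace X]

theorem ofReal_exp_neg_sq_le_tsum_indicator_ball (x₀ x : X) {r : ℝ} (hr : 0 < r) :
    ENNReal.ofReal (exp (-(dist x x₀ / r) ^ 2)) ≤
      ∑' j : ℕ, (ball x₀ (r * (j + 1))).indicator (fun _ => ENNReal.ofReal (exp (-j))) x := by
  set k := ⌊dist x x₀ / r⌋₊
  have hk : (k : ℝ) ≤ dist x x₀ / r := Nat.floor_le (by positivity)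
  have hx : x ∈ ball x₀ (r * (k + 1)) := by
    rw [mem_ball, ← div_lt_iff₀' hr]
    exact Nat.lt_floor_add_one _
  have hexp : exp (-(dist x x₀ / r) ^ 2) ≤ exp (-k) := by
    have : (k : ℝ) ≤ k ^ 2 := by exact_mod_cast Nat.le_self_pow two_ne_zero k
    gcongr
    nlinarith
  calc ENNReal.ofReal (exp (-(dist x x₀ / r) ^ 2)) ≤ ENNReal.ofReal (exp (-k)) :=
        ENNReal.ofReal_le_ofReal hexp
    _ = (ball x₀ (r * (k + 1))).indicator (fun _ => ENNReal.ofReal (exp (-k))) x :=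
        (Set.indicator_of_mem hx (fun _ => ENNReal.ofReal (exp (-k)))).symm
    _ ≤ _ := ENNReal.le_tsum (f := fun j : ℕ =>
        (ball x₀ (r * (j + 1))).indicator (fun _ => ENNReal.ofReal (exp (-j))) x) k

variable [MeasurableSpace X] [OpensMeasurableSpace X]

theorem lintegral_exp_neg_sq_dist_le (ν : Measure X) (x₀ : X) {d : ℕ} {M r : ℝ} (hr : 0 < r)
    (hball : ∀ ρ, 0 < ρ → ν (ball x₀ ρ) ≤ ENNReal.ofReal (M * ρ ^ d)) :
    ∫⁻ x, ENNReal.ofReal (exp (-(dist x x₀ / r) ^ 2)) ∂ν ≤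
      ENNReal.ofReal (gaussianShellSum d * (M * r ^ d)) := by
  calc ∫⁻ x, ENNReal.ofReal (exp (-(dist x x₀ / r) ^ 2)) ∂ν
      ≤ ∫⁻ x, ∑' j : ℕ,
          (ball x₀ (r * (j + 1))).indicator (fun _ => ENNReal.ofReal (exp (-j))) x ∂ν :=
        lintegral_mono fun x => ofReal_exp_neg_sq_le_tsum_indicator_ball x₀ x hr
    _ = ∑' j : ℕ, ENNReal.ofReal (exp (-j)) * ν (ball x₀ (r * (j + 1))) := by
        rw [lintegral_tsum fun j => (measurable_const.indicator measurableSet_ball).aemeasurable]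
        simp only [lintegral_indicator_const measurableSet_ball]
    _ ≤ ∑' j : ℕ,
          ENNReal.ofReal (((j : ℝ) + 1) ^ d * exp (-j)) * ENNReal.ofReal (M * r ^ d) := by
        refine ENNReal.tsum_le_tsum fun j => ?_
        grw [hball _ (by positivity), ← ENNReal.ofReal_mul (by positivity),
          ← ENNReal.ofReal_mul (by positivity)]
        exact le_of_eq (by rw [mul_pow]; ring_nf)
    _ = ENNReal.ofReal (gaussianShellSum d * (M * r ^ d)) := by
        rw [ENNReal.tsum_mul_right, ← ENNReal.ofReal_tsum_of_nonneg (fun _ => by positivity)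
          (summable_succ_pow_mul_exp_neg d), ENNReal.ofReal_mul (gaussianShellSum_pos d).le]
        rfl

end Shells

theorem Ffun_le_of_measure_inter_ball_le (n : ℕ) (S : Set (EuclideanSpace ℝ (Fin (n + 1))))
    (x₀ : EuclideanSpace ℝ (Fin (n + 1))) {M : ℝ} (hM : 0 ≤ M)
    (hS : ∀ r, 0 < r → μH[(n : ℝ)] (S ∩ ball x₀ r) ≤ ENNReal.ofReal (M * r ^ n))
    {t : ℝ} (ht : 0 < t) :
    Ffun n S x₀ t ≤ π ^ (-(n : ℝ) / 2) * gaussianShellSum n * M := by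
  set r := √(4 * t) with hr_def
  have hr : 0 < r := sqrt_pos.2 (by positivity)
  have hrn : r ^ n = (4 * t) ^ ((n : ℝ) / 2) := by
    rw [hr_def, sqrt_eq_rpow, ← rpow_natCast, ← rpow_mul (by positivity)]
    ring_nf
  have hgauss (x : EuclideanSpace ℝ (Fin (n + 1))) :
      exp (-‖x - x₀‖ ^ 2 / (4 * t)) = exp (-(dist x x₀ / r) ^ 2) := by
    rw [dist_eq_norm, div_pow, sq_sqrt (by positivity), neg_div]
  have hint : ∫ x in S, exp (-‖x - x₀‖ ^ 2 / (4 * t)) ∂μH[(n : ℝ)] ≤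
      gaussianShellSum n * (M * r ^ n) := by
    simp_rw [hgauss]
    rw [integral_eq_lintegral_of_nonneg_ae (ae_of_all _ fun _ => (exp_pos _).le)
      (by fun_prop : Continuous fun x => exp (-(dist x x₀ / r) ^ 2)).aestronglyMeasurable]
    refine ENNReal.toReal_le_of_le_ofReal
      (mul_nonneg (gaussianShellSum_pos n).le (by positivity)) ?_
    refine lintegral_exp_neg_sq_dist_le _ x₀ hr fun ρ hρ => ?_
    rw [Measure.restrict_apply measurableSet_ball, Set.inter_comm]
    exact hS ρ hρ
  have hscale : (4 * π * t) ^ (-(n : ℝ) / 2) * r ^ n = π ^ (-(n : ℝ) / 2) := by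
    rw [show 4 * π * t = π * (4 * t) by ring, mul_rpow pi_pos.le (by positivity), hrn, mul_assoc,
      ← rpow_add (by positivity), neg_div, neg_add_cancel, rpow_zero, mul_one]
  calc Ffun n S x₀ t
      ≤ (4 * π * t) ^ (-(n : ℝ) / 2) * (gaussianShellSum n * (M * r ^ n)) :=
        mul_le_mul_of_nonneg_left hint (by positivity)
    _ = π ^ (-(n : ℝ) / 2) * gaussianShellSum n * M := by
        rw [← hscale]
        ring

/-- Conversely, the entropy is bounded by a dimensional constant times the supremal
area ratio: if `ℋⁿ(Σ ∩ B_r(x)) ≤ M rⁿ` for all balls, then `λ(Σ) ≤ C(n) M`. -/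
theorem stmt_8 (n : ℕ) :
    ∃ C : ℝ, 0 < C ∧
      ∀ (S : Set (EuclideanSpace ℝ (Fin (n + 1)))) (M : ℝ), 0 ≤ M →
        (∀ (x : EuclideanSpace ℝ (Fin (n + 1))) (r : ℝ), 0 < r →
          μH[(n : ℝ)] (S ∩ ball x r) ≤ ENNReal.ofReal (M * r ^ n)) →
        entropy n S ≤ C * M := by
  have hC : 0 < π ^ (-(n : ℝ) / 2) * gaussianShellSum n :=
    mul_pos (rpow_pos_of_pos pi_pos _) (gaussianShellSum_pos n)
  refine ⟨_, hC, fun S M hM hS => ?_⟩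
  have hCM : 0 ≤ π ^ (-(n : ℝ) / 2) * gaussianShellSum n * M := mul_nonneg hC.le hM
  exact Real.iSup_le (fun x₀ => Real.iSup_le
    (fun t => Ffun_le_of_measure_inter_ball_le n S x₀ hM (hS x₀) t.2) hCM) hCM
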